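/- Monotonicity of partial covariance weights. If K = Σ⁻¹ is adapted to G = (V,E), then for any path π in G with P = V(π) and any subset A with P ⊆ A ⊆ V, it holds that |ω(π, Σ_{PP·P̄})| ≤ |ω(π, Σ_{AA·Ā})| ≤ |ω(π, Σ)|; in particular ω(π,Σ) = ω(π, Σ_{PP·P̄}) × IF_P. -/

import Mathlib

open Matrix BigOperators Finset

variable {V : Type*} [Fintype V] [DecidableEq V]

/-- Submatrix of `M` with rows indexed by `A` and columns indexed by `B`. -/
noncomputable def subm (M : Matrix V V ℝ) (A B : Finset V) : Matrix ↥A ↥B ℝ :=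
  Matrix.of fun i j => M i.1 j.1

/-- Partial covariance matrix `Σ_{AA·B}` of `A` given a disjoint set `B`. -/
noncomputable def pcovOn (M : Matrix V V ℝ) (A B : Finset V) : Matrix ↥A ↥A ℝ :=
  subm M A A - subm M A B * (subm M B B)⁻¹ * subm M B A

/-- Partial covariance matrix `Σ_{AA·Ā}` given the complement of `A`. -/
noncomputable def pcov (M : Matrix V V ℝ) (A : Finset V) : Matrix ↥A ↥A ℝ :=
  pcovOn M A Aᶜ

/-- Inflation factor of `A` on `B`. -/
noncomputable def inflF (M : Matrix V V ℝ) (A B : Finset V) : ℝ :=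
  ((subm M A A).det * (subm M B B).det) / (subm M (A ∪ B) (A ∪ B)).det

/-- The path weight `ω(π, Γ)` of a walk `p`, computed from `Θ = Γ⁻¹`. -/
noncomputable def pathWeight (Γ : Matrix V V ℝ) {G : SimpleGraph V} {x y : V}
    (p : G.Walk x y) : ℝ :=
  (-1 : ℝ) ^ (p.support.toFinset.card + 1) *
    ((subm Γ⁻¹ p.support.toFinsetᶜ p.support.toFinsetᶜ).det / Γ⁻¹.det) *
    (p.darts.map fun d => Γ⁻¹ d.toProd.1 d.toProd.2).prod

/-- The partial covariance weight `ω(π, Σ_{AA·Ā})` of a walk `p` with vertices in `A`,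
expressed via `K = Σ⁻¹`: `(−1)^{|P|+1} (det K_{A∖P,A∖P}/det K_AA) ∏ κ_uv`. -/
noncomputable def partialPathWeight (S : Matrix V V ℝ) (A : Finset V) {G : SimpleGraph V}
    {x y : V} (p : G.Walk x y) : ℝ :=
  (-1 : ℝ) ^ (p.support.toFinset.card + 1) *
    ((subm S⁻¹ (A \ p.support.toFinset) (A \ p.support.toFinset)).det /
      (subm S⁻¹ A A).det) *
    (p.darts.map fun d => S⁻¹ d.toProd.1 d.toProd.2).prod

/-- `K` is adapted to `G` when nonzero off-diagonal entries correspond to edges. -/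
def Adapted (K : Matrix V V ℝ) (G : SimpleGraph V) : Prop :=
  ∀ u v : V, u ≠ v → K u v ≠ 0 → G.Adj u v

/-- Correlation-type scaling of a positive definite matrix. -/
noncomputable def corrScale {ι : Type*} (M : Matrix ι ι ℝ) : Matrix ι ι ℝ :=
  Matrix.of fun i j => M i j / (Real.sqrt (M i i) * Real.sqrt (M j j))

/-- The inflated correlation matrix `Φ^V = diag(K)^{1/2} Σ diag(K)^{1/2}`. -/
noncomputable def inflCorr (S : Matrix V V ℝ) : Matrix V V ℝ :=
  Matrix.of fun u v => Real.sqrt (S⁻¹ u u) * S u v * Real.sqrt (S⁻¹ v v)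

/-- The weight `ω(π, M)` of a walk `p` whose vertices lie in `P`, computed in the
induced subgraph from a matrix `M` indexed by `P`; here `V(π) = P`, so the determinant
factor (over the empty set) is `1`. -/
noncomputable def subPathWeight {P : Finset V} (M : Matrix ↥P ↥P ℝ) {G : SimpleGraph V}
    {x y : V} (p : G.Walk x y) (hp : ∀ v ∈ p.support, v ∈ P) : ℝ :=
  (-1 : ℝ) ^ (p.support.toFinset.card + 1) * (1 / M⁻¹.det) *
    (p.darts.attach.map fun d =>
      M⁻¹ ⟨d.1.toProd.1, hp _ (SimpleGraph.Walk.dart_fst_mem_support_of_mem_darts p d.2)⟩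
          ⟨d.1.toProd.2, hp _ (SimpleGraph.Walk.dart_snd_mem_support_of_mem_darts p d.2)⟩).prod

/-- Product of partial correlations `ρ_{uv·V∖{u,v}} = −κ_uv/(√κ_uu √κ_vv)`
over the edges of a walk. -/
noncomputable def prodPartialCorr (S : Matrix V V ℝ) {G : SimpleGraph V} {x y : V}
    (p : G.Walk x y) : ℝ :=
  (p.darts.map fun d => -(corrScale S⁻¹ d.toProd.1 d.toProd.2)).prod

/-- A walk is chordless if every edge of `G` joining two of its vertices is an edge of
the walk. -/
def Chordless {G : SimpleGraph V} {x y : V} (p : G.Walk x y) : Prop :=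
  ∀ u v : V, u ∈ p.support → v ∈ p.support → G.Adj u v → s(u, v) ∈ p.edges

/-- The quantity `φ(π, R) = det((I−R)_{P̄P̄}) ∏ ρ_{uv·V∖{u,v}}`. -/
noncomputable def phiWeight (S : Matrix V V ℝ) {G : SimpleGraph V} {x y : V}
    (p : G.Walk x y) : ℝ :=
  (subm (corrScale S⁻¹) p.support.toFinsetᶜ p.support.toFinsetᶜ).det * prodPartialCorr S p

/-!
All three weights share the sign and the edge product `∏ κ_uv`, so only the positive ratio
`det K_{A∖P} / det K_{AA}` matters; it equals `1 / det K_{PP}` at `A = P` and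
`det K_{P̄P̄} / det K` at `A = V`. Fischer's inequality `det M_{X∪Y} ≤ det M_{XX} det M_{YY}` for
positive definite `M`, applied to `K` on `A = (A∖P) ∪ P`, gives the first inequality. Jacobi's
identity `det (Σ⁻¹)_{BB} · det Σ = det Σ_{B̄B̄}`, which follows from `(Σ⁻¹)_{BB} = (Σ_{BB·B̄})⁻¹` and
the Schur determinant formula, rewrites the ratio as `det Σ_{Ā∪P} / det Σ_{ĀĀ}`, and Fischer for `Σ`
on `Ā ∪ P` bounds this by `det Σ_{PP}`, the ratio at `A = V`. The same identity turns
`ω(π,Σ) / ω(π,Σ_{PP·P̄})` into `det Σ_{PP} det Σ_{P̄P̄} / det Σ = IF_P`.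
-/

section Minors

variable {ι : Type*} [Fintype ι] [DecidableEq ι]

theorem Matrix.PosSemidef.one_le_det_one_add {C : Matrix ι ι ℝ} (hC : C.PosSemidef) :
    1 ≤ (1 + C).det := by
  obtain ⟨U, hU, d, hd, rfl⟩ : ∃ U ∈ unitaryGroup ι ℝ, ∃ d : ι → ℝ, 0 ≤ d ∧
      C = U * diagonal d * star U :=
    ⟨_, SetLike.coe_mem _, _, hC.eigenvalues_nonneg, hC.1.spectral_theorem⟩
  have h : 1 + U * diagonal d * star U = U * diagonal (1 + d) * star U := by
    rw [show diagonal (1 + d) = 1 + diagonal d by rw [← diagonal_one, diagonal_add]; rfl,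
      Matrix.mul_add, Matrix.add_mul, Matrix.mul_one, Unitary.mul_star_self_of_mem hU]
  rw [h, det_mul_comm, ← Matrix.mul_assoc, Unitary.star_mul_self_of_mem hU, Matrix.one_mul,
    det_diagonal]
  exact Finset.one_le_prod fun i _ => le_add_of_nonneg_right (hd i)

open scoped MatrixOrder in
theorem Matrix.PosDef.det_le_det_add {A N : Matrix ι ι ℝ} (hA : A.PosDef) (hN : N.PosSemidef) :
    A.det ≤ (A + N).det := by
  obtain ⟨L, rfl⟩ := CStarAlgebra.nonneg_iff_eq_star_mul_self.mp hN.nonneg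
  rw [det_add_mul _ _ ((isUnit_iff_isUnit_det _).mp hA.isUnit)]
  exact le_mul_of_one_le_right hA.det_pos.le
    (hA.inv.posSemidef.mul_mul_conjTranspose_same L).one_le_det_one_add

theorem Matrix.PosDef.det_fromBlocks_le {κ : Type*} [Fintype κ] [DecidableEq κ]
    {A : Matrix ι ι ℝ} {B : Matrix ι κ ℝ} {D : Matrix κ κ ℝ}
    (h : (fromBlocks A B Bᴴ D).PosDef) : (fromBlocks A B Bᴴ D).det ≤ A.det * D.det := by
  have hD : D.PosDef := h.submatrix Sum.inr_injective
  let := D.invertibleOfIsUnitDet ((isUnit_iff_isUnit_det _).mp hD.isUnit)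
  have hdet : (fromBlocks A B Bᴴ D).det = D.det * (A - B * D⁻¹ * Bᴴ).det := by
    rw [det_fromBlocks₂₂, invOf_eq_nonsing_inv]
  have hSchur : (A - B * D⁻¹ * Bᴴ).PosDef := by
    refine ((PosDef.fromBlocks₂₂ A B hD).mp h.posSemidef).posDef_iff_det_ne_zero.mpr ?_
    exact right_ne_zero_of_mul (hdet ▸ h.det_pos.ne')
  have hle := hSchur.det_le_det_add (hD.inv.posSemidef.mul_mul_conjTranspose_same B)
  rw [sub_add_cancel] at hle
  rw [hdet, mul_comm A.det]
  exact mul_le_mul_of_nonneg_left hle hD.det_pos.le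

end Minors

theorem Matrix.PosDef.subm_self {ι : Type*} {M : Matrix ι ι ℝ} (hM : M.PosDef) (B : Finset ι) :
    (subm M B B).PosDef :=
  hM.submatrix Subtype.val_injective

section Subm

variable {ι : Type*} [DecidableEq ι]

theorem det_subm_univ [Fintype ι] (M : Matrix ι ι ℝ) : (subm M univ univ).det = M.det :=
  det_submatrix_equiv_self (Equiv.subtypeUnivEquiv mem_univ) M

theorem det_subm_empty (M : Matrix ι ι ℝ) : (subm M ∅ ∅).det = 1 :=
  det_isEmpty

theorem subm_union_submatrix (M : Matrix ι ι ℝ) {X Y : Finset ι} (h : Disjoint X Y) :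
    (subm M (X ∪ Y) (X ∪ Y)).submatrix (Equiv.Finset.union X Y h) (Equiv.Finset.union X Y h) =
      fromBlocks (subm M X X) (subm M X Y) (subm M Y X) (subm M Y Y) := by
  ext (i | i) (j | j) <;> rfl

theorem Matrix.PosDef.det_subm_union_le {M : Matrix ι ι ℝ} (hM : M.PosDef) {X Y : Finset ι}
    (h : Disjoint X Y) :
    (subm M (X ∪ Y) (X ∪ Y)).det ≤ (subm M X X).det * (subm M Y Y).det := by
  have hYX : subm M Y X = (subm M X Y)ᴴ := by
    conv_lhs => rw [← hM.1.eq]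
    rfl
  have hblocks := subm_union_submatrix M h
  rw [hYX] at hblocks
  rw [← det_submatrix_equiv_self (Equiv.Finset.union X Y h), hblocks]
  exact (hblocks ▸ (hM.subm_self _).submatrix (Equiv.injective _)).det_fromBlocks_le

variable [Fintype ι]

def sumComplEquiv (B : Finset ι) : ↥B ⊕ ↥Bᶜ ≃ ι :=
  (Equiv.sumCongr (Equiv.refl _) (Equiv.subtypeEquivRight fun _ => mem_compl)).trans
    (Equiv.sumCompl (· ∈ B))

theorem submatrix_sumComplEquiv (M : Matrix ι ι ℝ) (B : Finset ι) :
    M.submatrix (sumComplEquiv B) (sumComplEquiv B) =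
      fromBlocks (subm M B B) (subm M B Bᶜ) (subm M Bᶜ B) (subm M Bᶜ Bᶜ) := by
  ext (i | i) (j | j) <;> rfl

theorem det_eq_det_subm_compl_mul_det_pcov (M : Matrix ι ι ℝ) (B : Finset ι)
    (hD : IsUnit (subm M Bᶜ Bᶜ).det) : M.det = (subm M Bᶜ Bᶜ).det * (pcov M B).det := by
  let := (subm M Bᶜ Bᶜ).invertibleOfIsUnitDet hD
  rw [← det_submatrix_equiv_self (sumComplEquiv B), submatrix_sumComplEquiv, det_fromBlocks₂₂,
    invOf_eq_nonsing_inv]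
  rfl

theorem subm_inv_eq_inv_pcov (M : Matrix ι ι ℝ) (B : Finset ι) (hM : IsUnit M.det)
    (hD : IsUnit (subm M Bᶜ Bᶜ).det) : subm M⁻¹ B B = (pcov M B)⁻¹ := by
  let e := sumComplEquiv B
  have hblocks := submatrix_sumComplEquiv M B
  let := (subm M Bᶜ Bᶜ).invertibleOfIsUnitDet hD
  let := (M.submatrix e e).invertibleOfIsUnitDet (by rwa [det_submatrix_equiv_self])
  let : Invertible (fromBlocks (subm M B B) (subm M B Bᶜ) (subm M Bᶜ B) (subm M Bᶜ Bᶜ)) :=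
    hblocks ▸ this
  let := invertibleOfFromBlocks₂₂Invertible (subm M B B) (subm M B Bᶜ) (subm M Bᶜ B)
    (subm M Bᶜ Bᶜ)
  have h := congrArg toBlocks₁₁ (invOf_fromBlocks₂₂_eq (subm M B B) (subm M B Bᶜ) (subm M Bᶜ B)
    (subm M Bᶜ Bᶜ))
  simp only [invOf_eq_nonsing_inv, ← hblocks, inv_submatrix_equiv, toBlocks_fromBlocks₁₁] at h
  exact h

theorem det_subm_inv_mul_det (M : Matrix ι ι ℝ) (B : Finset ι) (hM : IsUnit M.det)
    (hD : IsUnit (subm M Bᶜ Bᶜ).det) : (subm M⁻¹ B B).det * M.det = (subm M Bᶜ Bᶜ).det := by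
  have hdet := det_eq_det_subm_compl_mul_det_pcov M B hD
  have hpcov : IsUnit (pcov M B).det := isUnit_of_mul_isUnit_right (hdet ▸ hM)
  rw [subm_inv_eq_inv_pcov M B hM hD, det_nonsing_inv, hdet, mul_left_comm,
    Ring.inverse_mul_cancel _ hpcov, mul_one]

end Subm

theorem Matrix.PosDef.det_subm_inv {ι : Type*} [Fintype ι] [DecidableEq ι] {S : Matrix ι ι ℝ}
    (hS : S.PosDef) (B : Finset ι) : (subm S⁻¹ B B).det = (subm S Bᶜ Bᶜ).det / S.det := by
  rw [eq_div_iff hS.det_pos.ne', det_subm_inv_mul_det S B ((isUnit_iff_isUnit_det _).mp hS.isUnit)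
    ((isUnit_iff_isUnit_det _).mp (hS.subm_self _).isUnit)]

theorem Matrix.PosDef.inv_det_subm_le_det_subm_sdiff_div {ι : Type*} [DecidableEq ι]
    {K : Matrix ι ι ℝ} (hK : K.PosDef) {P A : Finset ι} (hPA : P ⊆ A) :
    (subm K P P).det⁻¹ ≤ (subm K (A \ P) (A \ P)).det / (subm K A A).det := by
  rw [inv_eq_one_div, div_le_div_iff₀ (hK.subm_self P).det_pos (hK.subm_self A).det_pos, one_mul]
  have h := hK.det_subm_union_le (sdiff_disjoint : Disjoint (A \ P) P)
  rwa [sdiff_union_of_subset hPA] at h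

theorem Matrix.PosDef.det_subm_inv_sdiff_div_le {ι : Type*} [Fintype ι] [DecidableEq ι]
    {S : Matrix ι ι ℝ} (hS : S.PosDef) {P A : Finset ι} (hPA : P ⊆ A) :
    (subm S⁻¹ (A \ P) (A \ P)).det / (subm S⁻¹ A A).det ≤
      (subm S⁻¹ (univ \ P) (univ \ P)).det / (subm S⁻¹ univ univ).det := by
  have hcompl : (A \ P)ᶜ = Aᶜ ∪ P := by
    ext v
    simp only [mem_compl, mem_sdiff, mem_union]
    tauto
  rw [hS.det_subm_inv, hS.det_subm_inv, hS.det_subm_inv, hS.det_subm_inv,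
    div_div_div_cancel_right₀ hS.det_pos.ne', div_div_div_cancel_right₀ hS.det_pos.ne', hcompl,
    ← compl_eq_univ_sdiff, compl_compl, compl_univ, det_subm_empty, div_one,
    div_le_iff₀ (hS.subm_self Aᶜ).det_pos, mul_comm]
  exact hS.det_subm_union_le (disjoint_compl_left_iff.mpr hPA)

section Weights

variable {G : SimpleGraph V} {x y : V}

theorem partialPathWeight_univ (S : Matrix V V ℝ) (p : G.Walk x y) :
    partialPathWeight S univ p = pathWeight S p := by
  simp only [partialPathWeight, pathWeight, ← compl_eq_univ_sdiff, det_subm_univ]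

theorem abs_partialPathWeight {S : Matrix V V ℝ} (hS : S.PosDef) (A : Finset V)
    (p : G.Walk x y) :
    |partialPathWeight S A p| =
      (subm S⁻¹ (A \ p.support.toFinset) (A \ p.support.toFinset)).det / (subm S⁻¹ A A).det *
        |(p.darts.map fun d => S⁻¹ d.toProd.1 d.toProd.2).prod| := by
  rw [partialPathWeight, abs_mul, abs_mul, abs_pow, abs_neg, abs_one, one_pow, one_mul,
    abs_of_pos (div_pos (hS.inv.subm_self _).det_pos (hS.inv.subm_self _).det_pos)]

theorem pathWeight_eq_partialPathWeight_mul_inflF {S : Matrix V V ℝ} (hS : S.PosDef)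
    (p : G.Walk x y) :
    pathWeight S p = partialPathWeight S p.support.toFinset p *
      inflF S p.support.toFinset p.support.toFinsetᶜ := by
  have hPc := (hS.subm_self p.support.toFinsetᶜ).det_pos.ne'
  have hd := hS.det_pos.ne'
  rw [pathWeight, partialPathWeight, inflF, Finset.sdiff_self, det_subm_empty, union_compl,
    det_subm_univ, hS.det_subm_inv, hS.det_subm_inv, compl_compl, det_nonsing_inv,
    Ring.inverse_eq_inv']
  field_simp

end Weights

theorem weight_monotonicity_general {V : Type*} [Fintype V] [DecidableEq V]
    (S : Matrix V V ℝ) (hS : S.PosDef) (G : SimpleGraph V) {x y : V} (p : G.Walk x y)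
    (A : Finset V) (hPA : p.support.toFinset ⊆ A) :
    |partialPathWeight S p.support.toFinset p| ≤ |partialPathWeight S A p| ∧
    |partialPathWeight S A p| ≤ |pathWeight S p| ∧
    pathWeight S p =
      partialPathWeight S p.support.toFinset p *
        inflF S p.support.toFinset p.support.toFinsetᶜ := by
  refine ⟨?_, ?_, pathWeight_eq_partialPathWeight_mul_inflF hS p⟩
  · rw [abs_partialPathWeight hS, abs_partialPathWeight hS, Finset.sdiff_self, det_subm_empty,
      one_div]
    exact mul_le_mul_of_nonneg_right (hS.inv.inv_det_subm_le_det_subm_sdiff_div hPA)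
      (abs_nonneg _)
  · rw [← partialPathWeight_univ, abs_partialPathWeight hS, abs_partialPathWeight hS]
    exact mul_le_mul_of_nonneg_right (hS.det_subm_inv_sdiff_div_le hPA) (abs_nonneg _)

/-- monotonicity of partial covariance weights:
`|ω(π,Σ_{PP·P̄})| ≤ |ω(π,Σ_{AA·Ā})| ≤ |ω(π,Σ)|` for `P ⊆ A ⊆ V`, and
`ω(π,Σ) = ω(π,Σ_{PP·P̄}) × IF_P`. -/
theorem weight_monotonicity {V : Type*} [Fintype V] [DecidableEq V]
    (S : Matrix V V ℝ) (hS : S.PosDef) (G : SimpleGraph V) [DecidableRel G.Adj]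
    (hadapt : Adapted S⁻¹ G) {x y : V} (hxy : x ≠ y) (p : G.Walk x y) (hp : p.IsPath)
    (A : Finset V) (hPA : p.support.toFinset ⊆ A) :
    |partialPathWeight S p.support.toFinset p| ≤ |partialPathWeight S A p| ∧
    |partialPathWeight S A p| ≤ |pathWeight S p| ∧
    pathWeight S p =
      partialPathWeight S p.support.toFinset p *
        inflF S p.support.toFinset p.support.toFinsetᶜ :=
  weight_monotonicity_general S hS G p A hPA
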